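/- arXiv:1405.0295 — 2 statements merged into one kernel-verified Lean document; each statement's English description precedes it below -/
import Mathlib

section
/- Let u₀, v₀ > 0 and let u_i, v_i ≥ 0 for i = 1,...,k. Suppose there are constants a > 0 and b_i ≥ a, and ε_i ∈ (0,1) for i = 1,...,k, such that u₀ ≤ a v₀, and for each i = 1,...,k, u_i ≤ b_i v_i and v_i ≤ ε_i v₀. Then ∑_{i=0}^k u_i ≤ (a + ∑_{i=1}^k (b_i - a) ε_i) · ∑_{i=0}^k v_i. -/
/-- Bogdan's comparison lemma ([B, Lemma 15]): if `u₀ ≤ a v₀`, `u_i ≤ b_i v_i`,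
`v_i ≤ ε_i v₀` with `a ≤ b_i`, `ε_i ∈ (0,1)`, then
`∑_{i=0}^k u_i ≤ (a + ∑_{i=1}^k (b_i - a) ε_i) ∑_{i=0}^k v_i`. -/
theorem bogdan_comparison_lemma (k : ℕ) (u v b ε : ℕ → ℝ) (a : ℝ)
    (hu0 : 0 < u 0) (hv0 : 0 < v 0)
    (hu : ∀ i, 1 ≤ i → i ≤ k → 0 ≤ u i) (hv : ∀ i, 1 ≤ i → i ≤ k → 0 ≤ v i)
    (ha : 0 < a) (hb : ∀ i, 1 ≤ i → i ≤ k → a ≤ b i)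
    (hε : ∀ i, 1 ≤ i → i ≤ k → 0 < ε i ∧ ε i < 1)
    (h0 : u 0 ≤ a * v 0)
    (hbi : ∀ i, 1 ≤ i → i ≤ k → u i ≤ b i * v i)
    (hεi : ∀ i, 1 ≤ i → i ≤ k → v i ≤ ε i * v 0) :
    ∑ i ∈ Finset.range (k + 1), u i ≤
      (a + ∑ i ∈ Finset.Icc 1 k, (b i - a) * ε i) * ∑ i ∈ Finset.range (k + 1), v i := by
  have hset : Finset.range (k + 1) = insert 0 (Finset.Icc 1 k) := by
    ext i; simp; omega
  have h0mem : (0 : ℕ) ∉ Finset.Icc 1 k := by simp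
  rw [hset, Finset.sum_insert h0mem, Finset.sum_insert h0mem]
  set S := ∑ i ∈ Finset.Icc 1 k, (b i - a) * ε i with hSdef
  set T := ∑ i ∈ Finset.Icc 1 k, v i with hTdef
  have hT0 : 0 ≤ T := Finset.sum_nonneg fun i hi => by
    simp only [Finset.mem_Icc] at hi; exact hv i hi.1 hi.2
  have hS0 : 0 ≤ S := Finset.sum_nonneg fun i hi => by
    simp only [Finset.mem_Icc] at hi
    exact mul_nonneg (by linarith [hb i hi.1 hi.2]) (le_of_lt (hε i hi.1 hi.2).1)
  have hmain : ∑ i ∈ Finset.Icc 1 k, u i ≤ a * T + S * v 0 := by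
    have : ∑ i ∈ Finset.Icc 1 k, u i ≤
        ∑ i ∈ Finset.Icc 1 k, (a * v i + (b i - a) * ε i * v 0) := by
      apply Finset.sum_le_sum
      intro i hi
      simp only [Finset.mem_Icc] at hi
      have h1 := hbi i hi.1 hi.2
      have h2 := hεi i hi.1 hi.2
      have h3 := hb i hi.1 hi.2
      have h4 := (hε i hi.1 hi.2).1
      nlinarith
    rw [Finset.sum_add_distrib, ← Finset.mul_sum, ← Finset.sum_mul] at this
    exact this
  nlinarith [mul_nonneg hS0 hT0]
end

section
/- Let C₁ ≥ 1, set δ = 1 - (1/(2C₁)) ∈ (1/2, 1), let c₁ ≥ 10 with 1 + c₁/2 ≥ C₁², let ε = (1-δ)/(20 c₁), and ζ = √((1+δ)/2). Define, for ρ ∈ [0,1] and integer k ≥ 1, A = 1 + c₁(2δρ + 2ε/(ζ-ε))ζ^k + c₁²(δρ + ε/(ζ-ε))² ζ^{2k} and B = (1 + c₁ δρ ζ^k)(1 + c₁ ζ^{k+2}). Then B - (1 + 3ε^{k+1}) A ≥ 0. -/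
/-!
Write `t = 1 - δ`, `X = ζ ^ k`, `a = δ ρ` and `η = ε / (ζ - ε)`. Then `A = (1 + c₁ (a + η) X)²` and
`B - A = c₁ X (ζ² - a - 2η)(1 + c₁ a X) - (c₁ η X)²`. Since `ζ² = 1 - t/2`, `a ≤ 1 - t` and
`η ≤ 4ε = t / (5 c₁)`, the gap `ζ² - a - 2η` is at least `2t/5`, so `B - A ≥ 3 t X`. On the other
side `A ≤ 9 c₁²`, and `20 c₁ ε ^ k ≤ (20 c₁ ε) ^ k = t ^ k ≤ ζ ^ k`, so the error term
`3 ε ^ (k+1) A` is at most `(27/400) t X`.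
-/

lemma div_sub_le_four_mul {ε ζ : ℝ} (hε : 0 ≤ ε) (hζε : 1 / 4 ≤ ζ - ε) :
    ε / (ζ - ε) ≤ 4 * ε := by
  rw [div_le_iff₀ (by linarith)]
  nlinarith

lemma mul_pow_le_pow_of_mul_le {m ε ζ : ℝ} {k : ℕ} (hm : 1 ≤ m) (hε : 0 ≤ ε) (hk : k ≠ 0)
    (hmε : m * ε ≤ ζ) : m * ε ^ k ≤ ζ ^ k :=
  calc m * ε ^ k ≤ m ^ k * ε ^ k := by gcongr; exact le_self_pow₀ hm hk
    _ = (m * ε) ^ k := (mul_pow m ε k).symm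
    _ ≤ ζ ^ k := by gcongr

lemma one_add_mul_mul_sq_le {c s X : ℝ} (hc : 1 ≤ c) (hs0 : 0 ≤ s) (hs : s ≤ 2) (hX0 : 0 ≤ X)
    (hX : X ≤ 1) : (1 + c * s * X) ^ 2 ≤ 9 * c ^ 2 := by
  have hsX : s * X ≤ 2 := by nlinarith
  have h3c : 1 + c * s * X ≤ 3 * c := by nlinarith
  calc (1 + c * s * X) ^ 2 ≤ (3 * c) ^ 2 := by gcongr
    _ = 9 * c ^ 2 := by ring

lemma mul_one_add_sub_sq_eq (c a η X z : ℝ) :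
    (1 + c * a * X) * (1 + c * X * z) - (1 + c * (a + η) * X) ^ 2
      = c * X * (z - a - 2 * η) * (1 + c * a * X) - (c * η * X) ^ 2 := by
  ring

lemma three_mul_le_mul_one_add_sub_sq {c a η X z t : ℝ} (hc : 10 ≤ c) (ha : 0 ≤ a)
    (hX : 0 ≤ X) (ht : 0 ≤ t) (hXt : X * t ≤ 1) (hη0 : 0 ≤ η) (hη : c * η ≤ t / 5)
    (hgap : 2 / 5 * t ≤ z - a - 2 * η) :
    3 * (X * t) ≤ (1 + c * a * X) * (1 + c * X * z) - (1 + c * (a + η) * X) ^ 2 := by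
  rw [mul_one_add_sub_sq_eq]
  have hgain : 4 * (X * t) ≤ c * X * (z - a - 2 * η) * (1 + c * a * X) :=
    calc 4 * (X * t) ≤ c * X * (2 / 5 * t) := by nlinarith [mul_nonneg hX ht]
      _ ≤ c * X * (z - a - 2 * η) := by gcongr
      _ ≤ c * X * (z - a - 2 * η) * (1 + c * a * X) :=
        le_mul_of_one_le_right (mul_nonneg (mul_nonneg (by linarith) hX) (by linarith))
          (by nlinarith [mul_nonneg ha hX])
  have hloss : (c * η * X) ^ 2 ≤ X * t :=
    calc (c * η * X) ^ 2 ≤ (t / 5 * X) ^ 2 := by gcongr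
      _ = (X * t) ^ 2 / 25 := by ring
      _ ≤ X * t := by nlinarith [mul_nonneg hX ht]
  linarith

lemma oscillation_key_inequality_of_sq {c δ ε ζ ρ : ℝ} {k : ℕ} (hc : 10 ≤ c) (hδ : 1 / 2 ≤ δ)
    (hδ1 : δ < 1) (hε : 20 * c * ε = 1 - δ) (hζ0 : 0 ≤ ζ) (hζ : ζ ^ 2 = (1 + δ) / 2)
    (hρ0 : 0 ≤ ρ) (hρ1 : ρ ≤ 1) (hk : k ≠ 0) :
    0 ≤ (1 + c * δ * ρ * ζ ^ k) * (1 + c * ζ ^ (k + 2))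
      - (1 + 3 * ε ^ (k + 1)) * (1 + c * (δ * ρ + ε / (ζ - ε)) * ζ ^ k) ^ 2 := by
  have hε0 : 0 < ε := by nlinarith
  have hε400 : ε ≤ 1 / 400 := by nlinarith
  have hζ1 : ζ ≤ 1 := by nlinarith
  have hζ2 : 1 / 2 ≤ ζ := by nlinarith
  have hη0 : 0 ≤ ε / (ζ - ε) := div_nonneg hε0.le (by linarith)
  have hη := div_sub_le_four_mul hε0.le (by linarith : 1 / 4 ≤ ζ - ε)
  have ha0 : 0 ≤ δ * ρ := by positivity
  have ha1 : δ * ρ ≤ δ := mul_le_of_le_one_right (by linarith) hρ1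
  have hX0 : 0 < ζ ^ k := by positivity
  have hX1 : ζ ^ k ≤ 1 := pow_le_one₀ hζ0 hζ1
  have hXt : ζ ^ k * (1 - δ) ≤ 1 := by nlinarith
  have hgain : 3 * (ζ ^ k * (1 - δ)) ≤ (1 + c * (δ * ρ) * ζ ^ k) * (1 + c * ζ ^ k * ζ ^ 2)
      - (1 + c * (δ * ρ + ε / (ζ - ε)) * ζ ^ k) ^ 2 :=
    three_mul_le_mul_one_add_sub_sq hc ha0 hX0.le (by linarith) hXt hη0 (by nlinarith)
      (by nlinarith)
  have hA : (1 + c * (δ * ρ + ε / (ζ - ε)) * ζ ^ k) ^ 2 ≤ 9 * c ^ 2 :=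
    one_add_mul_mul_sq_le (by linarith) (by positivity) (by linarith) hX0.le hX1
  have hεk : 20 * c * ε ^ k ≤ ζ ^ k := mul_pow_le_pow_of_mul_le (by linarith) hε0.le hk (by linarith)
  have herror : 3 * ε ^ (k + 1) * (1 + c * (δ * ρ + ε / (ζ - ε)) * ζ ^ k) ^ 2
      ≤ 3 * (ζ ^ k * (1 - δ)) :=
    calc 3 * ε ^ (k + 1) * (1 + c * (δ * ρ + ε / (ζ - ε)) * ζ ^ k) ^ 2
        ≤ 3 * ε ^ (k + 1) * (9 * c ^ 2) := by gcongr
      _ = 27 / 20 * (20 * c * ε) * (c * ε ^ k) := by ring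
      _ ≤ 3 * (ζ ^ k * (1 - δ)) := by rw [hε]; nlinarith [pow_pos hε0 k]
  have hB : ζ ^ (k + 2) = ζ ^ k * ζ ^ 2 := pow_add ζ k 2
  rw [hB]
  linarith

theorem oscillation_key_inequality_general (C₁ c₁ δ ε ζ ρ : ℝ) (k : ℕ)
    (hC₁ : 1 ≤ C₁) (hδ : δ = 1 - 1 / (2 * C₁))
    (hc₁ : 10 ≤ c₁)
    (hε : ε = (1 - δ) / (20 * c₁)) (hζ : ζ = Real.sqrt ((1 + δ) / 2))
    (hρ0 : 0 ≤ ρ) (hρ1 : ρ ≤ 1) (hk : 1 ≤ k)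
    (A B : ℝ)
    (hA : A = 1 + c₁ * (2 * δ * ρ + 2 * ε / (ζ - ε)) * ζ ^ k
            + c₁ ^ 2 * (δ * ρ + ε / (ζ - ε)) ^ 2 * ζ ^ (2 * k))
    (hB : B = (1 + c₁ * δ * ρ * ζ ^ k) * (1 + c₁ * ζ ^ (k + 2))) :
    0 ≤ B - (1 + 3 * ε ^ (k + 1)) * A := by
  have hinv : 0 < 1 / (2 * C₁) ∧ 1 / (2 * C₁) ≤ 1 / 2 := by
    constructor
    · positivity
    · rw [div_le_div_iff₀ (by positivity) (by norm_num)]; linarith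
  have hεc : 20 * c₁ * ε = 1 - δ := by rw [hε]; field_simp
  have hζsq : ζ ^ 2 = (1 + δ) / 2 := by rw [hζ, Real.sq_sqrt (by linarith)]
  have hA_sq : A = (1 + c₁ * (δ * ρ + ε / (ζ - ε)) * ζ ^ k) ^ 2 := by rw [hA]; ring
  rw [hA_sq, hB]
  exact oscillation_key_inequality_of_sq hc₁ (by linarith) (by linarith) hεc
    (hζ ▸ Real.sqrt_nonneg _) hζsq hρ0 hρ1 (by omega)

/-- Key arithmetic inequality completing the induction step of the oscillation
reduction lemma: with `δ = 1 - 1/(2C₁)`, `ε = (1-δ)/(20 c₁)`, `ζ = √((1+δ)/2)`,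
and `A`, `B` defined as below, `B - (1 + 3 ε^{k+1}) A ≥ 0`. -/
theorem oscillation_key_inequality (C₁ c₁ δ ε ζ ρ : ℝ) (k : ℕ)
    (hC₁ : 1 ≤ C₁) (hδ : δ = 1 - 1 / (2 * C₁))
    (hc₁ : 10 ≤ c₁) (hc₁C : 1 + c₁ / 2 ≥ C₁ ^ 2)
    (hε : ε = (1 - δ) / (20 * c₁)) (hζ : ζ = Real.sqrt ((1 + δ) / 2))
    (hρ0 : 0 ≤ ρ) (hρ1 : ρ ≤ 1) (hk : 1 ≤ k)
    (A B : ℝ)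
    (hA : A = 1 + c₁ * (2 * δ * ρ + 2 * ε / (ζ - ε)) * ζ ^ k
            + c₁ ^ 2 * (δ * ρ + ε / (ζ - ε)) ^ 2 * ζ ^ (2 * k))
    (hB : B = (1 + c₁ * δ * ρ * ζ ^ k) * (1 + c₁ * ζ ^ (k + 2))) :
    0 ≤ B - (1 + 3 * ε ^ (k + 1)) * A :=
  oscillation_key_inequality_general C₁ c₁ δ ε ζ ρ k hC₁ hδ hc₁ hε hζ hρ0 hρ1 hk A B hA hB
end
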